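/- arXiv:math/0604006 — 2 statements merged into one kernel-verified Lean document; each statement's English description precedes it below -/
import Mathlib

section
/- Let f be a λ-eigenfunction of H_k on the zigzag graph Γ¹ such that Σ_{(n,j)∈ℤ×{0,1,2}} (‖f_{n,j}‖²_{L²(0,1)} + ‖f′_{n,j}‖²_{L²(0,1)}) < ∞, and suppose φ(1,λ) = 0 (λ is a Dirichlet eigenvalue). Then f vanishes at all vertices of Γ¹: f_{n,j}(0) = 0 and f_{n,j}(1) = 0 for all (n,j) ∈ ℤ × {0,1,2}. -/
open MeasureTheory Set intervalIntegral

noncomputable section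

/-- `(y, y′)` is a solution of `−y″ + q·y = λ·y` on `[0,1]`,
in the integral-equation sense. -/
def IsSol (q : ℝ → ℝ) (lam : ℂ) (y y' : ℝ → ℂ) : Prop :=
  (∀ x ∈ Set.Icc (0:ℝ) 1, y x = y 0 + ∫ t in (0:ℝ)..x, y' t) ∧
  (∀ x ∈ Set.Icc (0:ℝ) 1, y' x = y' 0 + ∫ t in (0:ℝ)..x, ((q t : ℂ) - lam) * y t)

/-- A `λ`-eigenfunction of `H_k` on the zigzag graph `Γ¹` (Kirchhoff conditions,
with `sk = s^k`, `s = e^{2πi/N}`). -/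
def IsEigenfun (q : ℝ → ℝ) (lam sk : ℂ) (f f' : ℤ → Fin 3 → ℝ → ℂ) : Prop :=
  (∀ (n : ℤ) (j : Fin 3), IsSol q lam (f n j) (f' n j)) ∧
  ∀ n : ℤ,
    f n 0 1 = f n 1 0 ∧ f n 1 0 = sk * f n 2 1 ∧
    f (n + 1) 0 0 = f n 1 1 ∧ f n 1 1 = f n 2 0 ∧
    -f' n 0 1 + f' n 1 0 - sk * f' n 2 1 = 0 ∧
    f' (n + 1) 0 0 - f' n 1 1 + f' n 2 0 = 0

lemma tri_swap {f g : ℝ → ℂ} (hf : IntegrableOn f (Set.Ioc (0:ℝ) 1))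
    (hg : IntegrableOn g (Set.Ioc (0:ℝ) 1)) :
    ∫ t in Set.Ioc (0:ℝ) 1, f t * (∫ u in Set.Ioc t 1, g u) =
    ∫ u in Set.Ioc (0:ℝ) 1, (∫ t in Set.Ioc (0:ℝ) u, f t) * g u := by
  set μ1 := volume.restrict (Set.Ioc (0:ℝ) 1) with hμ1
  set K : ℝ → ℝ → ℂ := fun t u => ({p : ℝ × ℝ | p.1 < p.2}).indicator
      (fun p => f p.1 * g p.2) (t, u) with hK
  have hKi : Integrable (Function.uncurry K) (μ1.prod μ1) := by
    have h1 : Integrable (fun p : ℝ × ℝ => f p.1 * g p.2) (μ1.prod μ1) :=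
      Integrable.mul_prod hf hg
    exact h1.indicator (measurableSet_lt measurable_fst measurable_snd)
  have hswap := MeasureTheory.integral_integral_swap hKi
  have hL : ∫ t, (∫ u, K t u ∂μ1) ∂μ1 = ∫ t in Set.Ioc (0:ℝ) 1, f t * (∫ u in Set.Ioc t 1, g u) := by
    refine setIntegral_congr_fun measurableSet_Ioc (fun t ht => ?_)
    have h1 : ∀ u : ℝ, K t u = (Set.Ioi t).indicator (fun u => f t * g u) u := by
      intro u
      simp [hK, Set.indicator_apply, Set.mem_Ioi]
    simp_rw [h1]
    rw [MeasureTheory.integral_indicator measurableSet_Ioi, hμ1,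
      Measure.restrict_restrict measurableSet_Ioi]
    have h2 : Set.Ioi t ∩ Set.Ioc 0 1 = Set.Ioc t 1 := by
      ext u
      simp only [Set.mem_inter_iff, Set.mem_Ioi, Set.mem_Ioc]
      exact ⟨fun h => ⟨h.1, h.2.2⟩, fun h => ⟨h.1, lt_trans ht.1 h.1, h.2⟩⟩
    rw [h2, MeasureTheory.integral_const_mul]
  have hR : ∫ u, (∫ t, K t u ∂μ1) ∂μ1 = ∫ u in Set.Ioc (0:ℝ) 1, (∫ t in Set.Ioc (0:ℝ) u, f t) * g u := by
    refine setIntegral_congr_fun measurableSet_Ioc (fun u hu => ?_)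
    have h1 : ∀ t : ℝ, K t u = (Set.Iio u).indicator (fun t => f t * g u) t := by
      intro t
      simp [hK, Set.indicator_apply, Set.mem_Iio]
    simp_rw [h1]
    rw [MeasureTheory.integral_indicator measurableSet_Iio, hμ1,
      Measure.restrict_restrict measurableSet_Iio]
    have h2 : Set.Iio u ∩ Set.Ioc 0 1 = Set.Ioo 0 u := by
      ext t
      simp only [Set.mem_inter_iff, Set.mem_Iio, Set.mem_Ioc, Set.mem_Ioo]
      exact ⟨fun h => ⟨h.2.1, h.1⟩, fun h => ⟨h.2, h.1, le_trans h.2.le hu.2⟩⟩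
    rw [h2, ← integral_Ioc_eq_integral_Ioo, MeasureTheory.integral_mul_const]
  rw [hL, hR] at hswap
  exact hswap

lemma ibp {f g F G : ℝ → ℂ}
    (hf : IntervalIntegrable f volume 0 1) (hg : IntervalIntegrable g volume 0 1)
    (hF : ∀ x ∈ Set.Icc (0:ℝ) 1, F x = F 0 + ∫ t in (0:ℝ)..x, f t)
    (hG : ∀ x ∈ Set.Icc (0:ℝ) 1, G x = G 0 + ∫ t in (0:ℝ)..x, g t)
    (htri : ∫ t in Set.Ioc (0:ℝ) 1, f t * (∫ u in Set.Ioc t 1, g u) =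
      ∫ u in Set.Ioc (0:ℝ) 1, (∫ t in Set.Ioc (0:ℝ) u, f t) * g u) :
    F 1 * G 1 - F 0 * G 0 = ∫ t in (0:ℝ)..1, (f t * G t + F t * g t) := by
  have h01 : (0:ℝ) ≤ 1 := zero_le_one
  have huIcc : Set.uIcc (0:ℝ) 1 = Set.Icc 0 1 := Set.uIcc_of_le h01
  set Jf : ℝ → ℂ := fun x => ∫ t in (0:ℝ)..x, f t with hJf
  set Jg : ℝ → ℂ := fun x => ∫ t in (0:ℝ)..x, g t with hJg
  have hfI : IntegrableOn f (Set.Ioc (0:ℝ) 1) :=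
    (intervalIntegrable_iff_integrableOn_Ioc_of_le h01).1 hf
  have hgI : IntegrableOn g (Set.Ioc (0:ℝ) 1) :=
    (intervalIntegrable_iff_integrableOn_Ioc_of_le h01).1 hg
  have hfu : IntegrableOn f (Set.uIcc (0:ℝ) 1) := by
    rw [huIcc, integrableOn_Icc_iff_integrableOn_Ioc]; exact hfI
  have hgu : IntegrableOn g (Set.uIcc (0:ℝ) 1) := by
    rw [huIcc, integrableOn_Icc_iff_integrableOn_Ioc]; exact hgI
  have hJfc : ContinuousOn Jf (Set.uIcc (0:ℝ) 1) :=
    intervalIntegral.continuousOn_primitive_interval hfu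
  have hJgc : ContinuousOn Jg (Set.uIcc (0:ℝ) 1) :=
    intervalIntegral.continuousOn_primitive_interval hgu
  -- Step 1: rewrite the RHS integrand
  have step1 : ∫ t in (0:ℝ)..1, (f t * G t + F t * g t) =
      ∫ t in (0:ℝ)..1, (f t * G 0 + f t * Jg t + (F 0 * g t + Jf t * g t)) := by
    refine intervalIntegral.integral_congr (fun t ht => ?_)
    rw [huIcc] at ht
    rw [hF t ht, hG t ht]
    ring
  -- integrabilities
  have i1 : IntervalIntegrable (fun t => f t * G 0) volume 0 1 := hf.mul_const _
  have i2 : IntervalIntegrable (fun t => f t * Jg t) volume 0 1 := hf.mul_continuousOn hJgc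
  have i3 : IntervalIntegrable (fun t => F 0 * g t) volume 0 1 := hg.const_mul _
  have i4 : IntervalIntegrable (fun t => Jf t * g t) volume 0 1 := hg.continuousOn_mul hJfc
  have step2 : ∫ t in (0:ℝ)..1, (f t * G 0 + f t * Jg t + (F 0 * g t + Jf t * g t)) =
      (∫ t in (0:ℝ)..1, f t * G 0) + (∫ t in (0:ℝ)..1, f t * Jg t) +
      ((∫ t in (0:ℝ)..1, F 0 * g t) + (∫ t in (0:ℝ)..1, Jf t * g t)) := by
    rw [intervalIntegral.integral_add (i1.add i2) (i3.add i4),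
      intervalIntegral.integral_add i1 i2, intervalIntegral.integral_add i3 i4]
  have e1 : (∫ t in (0:ℝ)..1, f t * G 0) = Jf 1 * G 0 := intervalIntegral.integral_mul_const _ _
  have e3 : (∫ t in (0:ℝ)..1, F 0 * g t) = F 0 * Jg 1 := intervalIntegral.integral_const_mul _ _
  -- the key claim
  have key : (∫ t in (0:ℝ)..1, f t * Jg t) + (∫ t in (0:ℝ)..1, Jf t * g t) = Jf 1 * Jg 1 := by
    have hsplit : ∀ t ∈ Set.Ioc (0:ℝ) 1, Jg t = Jg 1 - ∫ u in Set.Ioc t 1, g u := by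
      intro t ht
      have hadd : Jg t + ∫ u in t..1, g u = Jg 1 :=
        intervalIntegral.integral_add_adjacent_intervals
          (hg.mono_set (by rw [huIcc]; exact Set.uIcc_subset_Icc ⟨le_rfl, h01⟩ ⟨ht.1.le, ht.2⟩))
          (hg.mono_set (by rw [huIcc]; exact Set.uIcc_subset_Icc ⟨ht.1.le, ht.2⟩ ⟨h01, le_rfl⟩))
      rw [intervalIntegral.integral_of_le ht.2] at hadd
      linear_combination hadd
    have hIoo : IntegrableOn (fun t => f t * ∫ u in Set.Ioc t 1, g u) (Set.Ioc (0:ℝ) 1) := by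
      have hc : ContinuousOn (fun t => ∫ u in t..1, g u) (Set.uIcc (0:ℝ) 1) :=
        intervalIntegral.continuousOn_primitive_interval_left hgu
      have : IntervalIntegrable (fun t => f t * ∫ u in t..1, g u) volume 0 1 :=
        hf.mul_continuousOn hc
      have h5 : IntegrableOn (fun t => f t * ∫ u in t..1, g u) (Set.Ioc (0:ℝ) 1) :=
        (intervalIntegrable_iff_integrableOn_Ioc_of_le h01).1 this
      refine h5.congr_fun (fun t ht => ?_) measurableSet_Ioc
      dsimp only; rw [intervalIntegral.integral_of_le ht.2]
    have j2 : (∫ t in (0:ℝ)..1, f t * Jg t) =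
        Jf 1 * Jg 1 - ∫ t in Set.Ioc (0:ℝ) 1, f t * ∫ u in Set.Ioc t 1, g u := by
      rw [intervalIntegral.integral_of_le h01]
      have : ∫ t in Set.Ioc (0:ℝ) 1, f t * Jg t =
          ∫ t in Set.Ioc (0:ℝ) 1, (f t * Jg 1 - f t * ∫ u in Set.Ioc t 1, g u) := by
        refine setIntegral_congr_fun measurableSet_Ioc (fun t ht => ?_)
        rw [hsplit t ht]; ring
      rw [this, integral_sub (hfI.mul_const _) hIoo, MeasureTheory.integral_mul_const]
      have : (∫ t in Set.Ioc (0:ℝ) 1, f t) = Jf 1 := (intervalIntegral.integral_of_le h01).symm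
      rw [this]
    have j3 : (∫ t in (0:ℝ)..1, Jf t * g t) =
        ∫ u in Set.Ioc (0:ℝ) 1, (∫ t in Set.Ioc (0:ℝ) u, f t) * g u := by
      rw [intervalIntegral.integral_of_le h01]
      refine setIntegral_congr_fun measurableSet_Ioc (fun u hu => ?_)
      rw [← intervalIntegral.integral_of_le hu.1.le]
    rw [j2, j3, ← htri]
    ring
  have hF1 : F 1 = F 0 + Jf 1 := hF 1 ⟨h01, le_rfl⟩
  have hG1 : G 1 = G 0 + Jg 1 := hG 1 ⟨h01, le_rfl⟩
  rw [step1, step2, e1, e3, hF1, hG1]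
  linear_combination -key

lemma my_gronwall {g u : ℝ → ℝ} {b C : ℝ} (hb : 0 ≤ b) (hC : 0 ≤ C)
    (hg1 : ∀ x ∈ Set.Icc (0:ℝ) b, 1 ≤ g x)
    (hgi : IntervalIntegrable g volume 0 b)
    (hu : ContinuousOn u (Set.Icc (0:ℝ) b)) (hu0 : ∀ x ∈ Set.Icc (0:ℝ) b, 0 ≤ u x)
    (hineq : ∀ x ∈ Set.Icc (0:ℝ) b, u x ≤ C + ∫ t in (0:ℝ)..x, g t * u t) :
    ∀ n : ℕ, ∀ x ∈ Set.Icc (0:ℝ) b, (∫ t in (0:ℝ)..x, g t) ≤ n / 2 →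
      C + (∫ t in (0:ℝ)..x, g t * u t) ≤ 2 ^ n * C := by
  have huIcc : Set.uIcc (0:ℝ) b = Set.Icc 0 b := Set.uIcc_of_le hb
  have hgui : IntervalIntegrable (fun t => g t * u t) volume 0 b :=
    hgi.mul_continuousOn (by rw [huIcc]; exact hu)
  -- sub-interval integrability
  have subi : ∀ {v : ℝ → ℝ}, IntervalIntegrable v volume 0 b →
      ∀ {x₁ x₂ : ℝ}, x₁ ∈ Set.Icc (0:ℝ) b → x₂ ∈ Set.Icc (0:ℝ) b →
      IntervalIntegrable v volume x₁ x₂ := by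
    intro v hv x₁ x₂ h1 h2
    exact hv.mono_set (by rw [huIcc]; exact Set.uIcc_subset_Icc h1 h2)
  have hg0 : ∀ x ∈ Set.Icc (0:ℝ) b, 0 ≤ g x := fun x hx => le_trans zero_le_one (hg1 x hx)
  have hgu0 : ∀ x ∈ Set.Icc (0:ℝ) b, 0 ≤ g x * u x :=
    fun x hx => mul_nonneg (hg0 x hx) (hu0 x hx)
  -- monotonicity of the primitive of g
  set G : ℝ → ℝ := fun x => ∫ t in (0:ℝ)..x, g t with hG
  set V : ℝ → ℝ := fun x => ∫ t in (0:ℝ)..x, g t * u t with hV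
  have hsplit : ∀ {v : ℝ → ℝ}, IntervalIntegrable v volume 0 b →
      ∀ {x₁ x₂ : ℝ}, x₁ ∈ Set.Icc (0:ℝ) b → x₂ ∈ Set.Icc (0:ℝ) b →
      (∫ t in (0:ℝ)..x₂, v t) = (∫ t in (0:ℝ)..x₁, v t) + ∫ t in x₁..x₂, v t := by
    intro v hv x₁ x₂ h1 h2
    rw [intervalIntegral.integral_add_adjacent_intervals
      (subi hv (Set.left_mem_Icc.2 hb) h1) (subi hv h1 h2)]
  have hGmono : ∀ {x₁ x₂ : ℝ}, x₁ ∈ Set.Icc (0:ℝ) b → x₂ ∈ Set.Icc (0:ℝ) b → x₁ ≤ x₂ →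
      G x₁ ≤ G x₂ := by
    intro x₁ x₂ h1 h2 h12
    have := hsplit hgi h1 h2
    have hpos : 0 ≤ ∫ t in x₁..x₂, g t :=
      intervalIntegral.integral_nonneg h12
        (fun t ht => hg0 t ⟨le_trans h1.1 ht.1, le_trans ht.2 h2.2⟩)
    simp only [hG]
    linarith [this]
  have hGcont : ContinuousOn G (Set.Icc (0:ℝ) b) := by
    have := intervalIntegral.continuousOn_primitive_interval
      (f := g) (μ := volume) (a := (0:ℝ)) (b := b)
      (by rw [huIcc, integrableOn_Icc_iff_integrableOn_Ioc]
          exact (intervalIntegrable_iff_integrableOn_Ioc_of_le hb).1 hgi)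
    rw [huIcc] at this; exact this
  intro n
  induction n with
  | zero =>
    intro x hx hGx
    -- g ≥ 1 forces x = 0
    have hx0 : x = 0 := by
      have h1x : (∫ t in (0:ℝ)..x, (1:ℝ)) ≤ G x := by
        apply intervalIntegral.integral_mono_on hx.1
          (intervalIntegrable_const) (subi hgi (Set.left_mem_Icc.2 hb) hx)
        intro t ht
        exact hg1 t ⟨ht.1, le_trans ht.2 hx.2⟩
      simp only [intervalIntegral.integral_const, smul_eq_mul, mul_one, sub_zero] at h1x
      have : G x ≤ 0 := by simpa using hGx
      linarith [hx.1]
    subst hx0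
    simp [hV]
  | succ n ih =>
    intro x hx hGx
    by_cases hcase : G x ≤ n / 2
    · have := ih x hx hcase
      have h2 : (2:ℝ) ^ n * C ≤ 2 ^ (n+1) * C := by
        apply mul_le_mul_of_nonneg_right _ hC
        exact pow_le_pow_right₀ one_le_two (Nat.le_succ n)
      linarith
    · push_neg at hcase
      -- find a with G a = n/2
      have hG0 : G 0 = 0 := by simp [hG]
      have hivt : (n / 2 : ℝ) ∈ G '' (Set.Icc 0 x) := by
        apply intermediate_value_Icc hx.1 (hGcont.mono (Set.Icc_subset_Icc le_rfl hx.2))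
        constructor
        · rw [hG0]; positivity
        · exact hcase.le
      obtain ⟨a, ha, hGa⟩ := hivt
      have haIcc : a ∈ Set.Icc (0:ℝ) b := ⟨ha.1, le_trans ha.2 hx.2⟩
      have hVa := ih a haIcc (le_of_eq hGa)
      -- max of u on [a, x]
      obtain ⟨t₀, ht₀, hmax⟩ := (isCompact_Icc (a := a) (b := x)).exists_isMaxOn
        (Set.nonempty_Icc.2 ha.2)
        (hu.mono (Set.Icc_subset_Icc ha.1 hx.2))
      set S := u t₀ with hS
      have hSnonneg : 0 ≤ S := hu0 t₀ ⟨le_trans ha.1 ht₀.1, le_trans ht₀.2 hx.2⟩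
      have hbnd : ∀ t ∈ Set.Icc a x, u t ≤ 2 ^ n * C + S / 2 := by
        intro t ht
        have htIcc : t ∈ Set.Icc (0:ℝ) b := ⟨le_trans ha.1 ht.1, le_trans ht.2 hx.2⟩
        have h1 : u t ≤ C + V t := hineq t htIcc
        have h2 : V t = V a + ∫ τ in a..t, g τ * u τ := hsplit hgui haIcc htIcc
        have h3 : (∫ τ in a..t, g τ * u τ) ≤ ∫ τ in a..t, g τ * S := by
          apply intervalIntegral.integral_mono_on ht.1
            (subi hgui haIcc htIcc) ((subi hgi haIcc htIcc).mul_const _)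
          intro τ hτ
          have hτIcc : τ ∈ Set.Icc (0:ℝ) b := ⟨le_trans ha.1 hτ.1, le_trans (le_trans hτ.2 ht.2) hx.2⟩
          exact mul_le_mul_of_nonneg_left (hmax ⟨hτ.1, le_trans hτ.2 ht.2⟩) (hg0 τ hτIcc)
        have h4 : (∫ τ in a..t, g τ * S) = (G t - G a) * S := by
          rw [intervalIntegral.integral_mul_const]
          congr 1
          have := hsplit hgi haIcc htIcc
          simp only [hG] at this ⊢
          linarith
        have h5 : G t - G a ≤ 1 / 2 := by
          have hm := hGmono htIcc hx ht.2
          have hGx' : G x ≤ ((n:ℝ) + 1) / 2 := by push_cast at hGx ⊢; exact hGx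
          rw [hGa]
          linarith
        have h6 : (G t - G a) * S ≤ (1/2) * S := by
          apply mul_le_mul_of_nonneg_right h5 hSnonneg
        linarith
      have hSle : S ≤ 2 ^ (n+1) * C := by
        have := hbnd t₀ ht₀
        rw [pow_succ]
        linarith
      -- conclude
      have h2 : V x = V a + ∫ τ in a..x, g τ * u τ := hsplit hgui haIcc hx
      have h3 : (∫ τ in a..x, g τ * u τ) ≤ (G x - G a) * S := by
        have h3' : (∫ τ in a..x, g τ * u τ) ≤ ∫ τ in a..x, g τ * S := by
          apply intervalIntegral.integral_mono_on ha.2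
            (subi hgui haIcc hx) ((subi hgi haIcc hx).mul_const _)
          intro τ hτ
          have hτIcc : τ ∈ Set.Icc (0:ℝ) b := ⟨le_trans ha.1 hτ.1, le_trans hτ.2 hx.2⟩
          exact mul_le_mul_of_nonneg_left (hmax ⟨hτ.1, hτ.2⟩) (hg0 τ hτIcc)
        have h4 : (∫ τ in a..x, g τ * S) = (G x - G a) * S := by
          rw [intervalIntegral.integral_mul_const]
          congr 1
          have := hsplit hgi haIcc hx
          simp only [hG] at this ⊢
          linarith
        linarith
      have h5 : G x - G a ≤ 1 / 2 := by
        have hGx' : G x ≤ ((n:ℝ) + 1) / 2 := by push_cast at hGx ⊢; exact hGx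
        rw [hGa]; linarith
      have h6 : (G x - G a) * S ≤ (1/2) * S := mul_le_mul_of_nonneg_right h5 hSnonneg
      have : C + V x ≤ (C + V a) + (1/2) * S := by linarith
      calc C + V x ≤ (C + V a) + (1/2) * S := this
        _ ≤ 2 ^ n * C + (1/2) * (2 ^ (n+1) * C) := by
            apply add_le_add hVa
            exact mul_le_mul_of_nonneg_left hSle (by norm_num)
        _ = 2 ^ (n+1) * C := by rw [pow_succ]; ring

lemma sol_regular {q : ℝ → ℝ} {lam : ℂ} {y y' : ℝ → ℂ}
    (hqi : IntegrableOn q (Set.Icc (0:ℝ) 1)) (h : IsSol q lam y y') :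
    ContinuousOn y (Set.Icc (0:ℝ) 1) ∧ ContinuousOn y' (Set.Icc (0:ℝ) 1) ∧
      IntervalIntegrable y' volume 0 1 ∧
      IntervalIntegrable (fun t => ((q t : ℂ) - lam) * y t) volume 0 1 := by
  obtain ⟨hy, hy'⟩ := h
  set h0 : ℝ → ℂ := fun t => ((q t : ℂ) - lam) * y t with hh0
  -- on any [0,b] where h0 is integrable, y and y' are continuous
  have good : ∀ b ∈ Set.Icc (0:ℝ) 1, IntegrableOn h0 (Set.Ioc 0 b) →
      ContinuousOn y (Set.Icc 0 b) ∧ ContinuousOn y' (Set.Icc 0 b) ∧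
      IntervalIntegrable y' volume 0 b := by
    intro b hb hint
    have hb0 : (0:ℝ) ≤ b := hb.1
    have huIcc : Set.uIcc (0:ℝ) b = Set.Icc 0 b := Set.uIcc_of_le hb0
    have hinti : IntervalIntegrable h0 volume 0 b :=
      (intervalIntegrable_iff_integrableOn_Ioc_of_le hb0).2 hint
    have hy'c : ContinuousOn y' (Set.Icc 0 b) := by
      have hprim : ContinuousOn (fun x => ∫ t in (0:ℝ)..x, h0 t) (Set.Icc 0 b) := by
        have := intervalIntegral.continuousOn_primitive_interval' hinti
          (by rw [huIcc]; exact Set.left_mem_Icc.2 hb0)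
        rw [huIcc] at this; exact this
      refine ContinuousOn.congr (f := fun x => y' 0 + ∫ t in (0:ℝ)..x, h0 t)
        (continuousOn_const.add hprim) ?_
      intro x hx
      exact hy' x ⟨hx.1, le_trans hx.2 hb.2⟩
    have hy'i : IntervalIntegrable y' volume 0 b := by
      rw [intervalIntegrable_iff_integrableOn_Ioc_of_le hb0]
      exact (hy'c.integrableOn_Icc).mono_set Set.Ioc_subset_Icc_self
    have hyc : ContinuousOn y (Set.Icc 0 b) := by
      have hprim : ContinuousOn (fun x => ∫ t in (0:ℝ)..x, y' t) (Set.Icc 0 b) := by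
        have := intervalIntegral.continuousOn_primitive_interval' hy'i
          (by rw [huIcc]; exact Set.left_mem_Icc.2 hb0)
        rw [huIcc] at this; exact this
      refine ContinuousOn.congr (f := fun x => y 0 + ∫ t in (0:ℝ)..x, y' t)
        (continuousOn_const.add hprim) ?_
      intro x hx
      exact hy x ⟨hx.1, le_trans hx.2 hb.2⟩
    exact ⟨hyc, hy'c, hy'i⟩
  -- the dominating function
  set g : ℝ → ℝ := fun t => 2 * (‖q t‖ + ‖lam‖ + 1) with hg
  have hgIcc : IntegrableOn g (Set.Icc (0:ℝ) 1) := by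
    rw [hg]
    have h1 : IntegrableOn (fun t => ‖q t‖ + ‖lam‖) (Set.Icc (0:ℝ) 1) :=
      hqi.norm.add (integrableOn_const measure_Icc_lt_top.ne)
    have h2 : IntegrableOn (fun t => ‖q t‖ + ‖lam‖ + 1) (Set.Icc (0:ℝ) 1) :=
      h1.add (integrableOn_const measure_Icc_lt_top.ne)
    exact h2.const_mul 2
  have hg1 : ∀ t, 1 ≤ g t := by
    intro t
    have := norm_nonneg (q t); have := norm_nonneg lam
    simp only [hg]; nlinarith
  have hgi01 : IntervalIntegrable g volume 0 1 :=
    (intervalIntegrable_iff_integrableOn_Ioc_of_le zero_le_one).2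
      (hgIcc.mono_set Set.Ioc_subset_Icc_self)
  set C : ℝ := ‖y 0‖ + ‖y' 0‖ with hC
  have hC0 : 0 ≤ C := by positivity
  set n0 : ℕ := ⌈2 * ∫ t in (0:ℝ)..1, g t⌉₊ with hn0
  set M : ℝ := 2 ^ n0 * C with hM
  have hM0 : 0 ≤ M := by positivity
  -- uniform bound on good intervals
  have bound : ∀ b ∈ Set.Icc (0:ℝ) 1, IntegrableOn h0 (Set.Ioc 0 b) →
      ∀ x ∈ Set.Icc (0:ℝ) b, ‖y x‖ + ‖y' x‖ ≤ M := by
    intro b hb hint x hx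
    obtain ⟨hyc, hy'c, hy'i⟩ := good b hb hint
    have hb0 : (0:ℝ) ≤ b := hb.1
    have huIcc : Set.uIcc (0:ℝ) b = Set.Icc 0 b := Set.uIcc_of_le hb0
    have hinti : IntervalIntegrable h0 volume 0 b :=
      (intervalIntegrable_iff_integrableOn_Ioc_of_le hb0).2 hint
    set u : ℝ → ℝ := fun t => ‖y t‖ + ‖y' t‖ with hu
    have huc : ContinuousOn u (Set.Icc (0:ℝ) b) := (hyc.norm).add (hy'c.norm)
    have hu0 : ∀ t ∈ Set.Icc (0:ℝ) b, 0 ≤ u t := fun t _ => by positivity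
    have hgib : IntervalIntegrable g volume 0 b :=
      hgi01.mono_set (by rw [huIcc, Set.uIcc_of_le zero_le_one]
                         exact Set.Icc_subset_Icc le_rfl hb.2)
    have subi : ∀ {v : ℝ → ℂ}, IntervalIntegrable v volume 0 b →
        ∀ {x' : ℝ}, x' ∈ Set.Icc (0:ℝ) b → IntervalIntegrable v volume 0 x' := by
      intro v hv x' hx'
      exact hv.mono_set (by rw [huIcc]
                            exact Set.uIcc_subset_Icc (Set.left_mem_Icc.2 hb0) hx')
    have subiR : ∀ {v : ℝ → ℝ}, IntervalIntegrable v volume 0 b →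
        ∀ {x' : ℝ}, x' ∈ Set.Icc (0:ℝ) b → IntervalIntegrable v volume 0 x' := by
      intro v hv x' hx'
      exact hv.mono_set (by rw [huIcc]
                            exact Set.uIcc_subset_Icc (Set.left_mem_Icc.2 hb0) hx')
    have hineq : ∀ t ∈ Set.Icc (0:ℝ) b, u t ≤ C + ∫ τ in (0:ℝ)..t, g τ * u τ := by
      intro t ht
      have ht01 : t ∈ Set.Icc (0:ℝ) 1 := ⟨ht.1, le_trans ht.2 hb.2⟩
      have e1 : ‖y t‖ ≤ ‖y 0‖ + ∫ τ in (0:ℝ)..t, ‖y' τ‖ := by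
        rw [hy t ht01]
        refine le_trans (norm_add_le _ _) (add_le_add le_rfl ?_)
        exact intervalIntegral.norm_integral_le_integral_norm ht.1
      have e2 : ‖y' t‖ ≤ ‖y' 0‖ + ∫ τ in (0:ℝ)..t, ‖h0 τ‖ := by
        rw [hy' t ht01]
        refine le_trans (norm_add_le _ _) (add_le_add le_rfl ?_)
        exact intervalIntegral.norm_integral_le_integral_norm ht.1
      have e3 : (∫ τ in (0:ℝ)..t, ‖y' τ‖) + (∫ τ in (0:ℝ)..t, ‖h0 τ‖) ≤
          ∫ τ in (0:ℝ)..t, g τ * u τ := by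
        rw [← intervalIntegral.integral_add ((subi hy'i ht).norm) ((subi hinti ht).norm)]
        apply intervalIntegral.integral_mono_on ht.1
          (((subi hy'i ht).norm).add ((subi hinti ht).norm))
          ((subiR hgib ht).mul_continuousOn
            (by rw [Set.uIcc_of_le ht.1]
                exact huc.mono (Set.Icc_subset_Icc le_rfl ht.2)))
        intro τ hτ
        have h1 : ‖h0 τ‖ ≤ (‖q τ‖ + ‖lam‖) * ‖y τ‖ := by
          simp only [hh0]
          rw [norm_mul]
          apply mul_le_mul_of_nonneg_right _ (norm_nonneg _)
          refine le_trans (norm_sub_le _ _) ?_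
          rw [Complex.norm_real]
        have hq0 := norm_nonneg (q τ); have hl0 := norm_nonneg lam
        have hy0 := norm_nonneg (y τ); have hy'0 := norm_nonneg (y' τ)
        simp only [hg, hu]
        nlinarith
      calc u t = ‖y t‖ + ‖y' t‖ := rfl
        _ ≤ C + ((∫ τ in (0:ℝ)..t, ‖y' τ‖) + ∫ τ in (0:ℝ)..t, ‖h0 τ‖) := by
            rw [hC]; linarith
        _ ≤ C + ∫ τ in (0:ℝ)..t, g τ * u τ := by linarith
    have hgr := my_gronwall hb0 hC0 (fun t _ => hg1 t) hgib huc hu0 hineq n0 x hx ?_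
    · have h2 := hineq x hx
      simp only [hu] at h2
      simp only [hM]
      linarith
    · -- ∫₀ˣ g ≤ n0 / 2
      have h1 : (∫ t in (0:ℝ)..x, g t) ≤ ∫ t in (0:ℝ)..1, g t := by
        have hx1 : x ≤ 1 := le_trans hx.2 hb.2
        have hgx : IntervalIntegrable g volume 0 x := by
          apply hgi01.mono_set
          rw [Set.uIcc_of_le hx.1, Set.uIcc_of_le zero_le_one]
          exact Set.Icc_subset_Icc le_rfl hx1
        have hgx1 : IntervalIntegrable g volume x 1 := by
          apply hgi01.mono_set
          rw [Set.uIcc_of_le hx1, Set.uIcc_of_le zero_le_one]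
          exact Set.Icc_subset_Icc hx.1 le_rfl
        have := intervalIntegral.integral_add_adjacent_intervals hgx hgx1
        have hpos : 0 ≤ ∫ t in x..1, g t :=
          intervalIntegral.integral_nonneg hx1
            (fun t _ => le_trans zero_le_one (hg1 t))
        linarith
      have h2 : 2 * (∫ t in (0:ℝ)..1, g t) ≤ (n0 : ℝ) := Nat.le_ceil _
      linarith
  -- integrability helper
  have hInt : ∀ (s : Set ℝ), MeasurableSet s → s ⊆ Set.Icc (0:ℝ) 1 →
      AEStronglyMeasurable y (volume.restrict s) → ∀ (B : ℝ), 0 ≤ B →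
      (∀ t ∈ s, ‖y t‖ ≤ B) → IntegrableOn h0 s := by
    intro s hs hsub hym B hB0 hB
    have hqs : AEStronglyMeasurable q (volume.restrict s) :=
      hqi.aestronglyMeasurable.mono_measure (Measure.restrict_mono hsub le_rfl)
    have hcs : AEStronglyMeasurable (fun t => ((q t:ℂ) - lam)) (volume.restrict s) :=
      (Complex.continuous_ofReal.comp_aestronglyMeasurable hqs).sub aestronglyMeasurable_const
    have hms : AEStronglyMeasurable h0 (volume.restrict s) := hcs.mul hym
    have hdom : IntegrableOn (fun t => (‖q t‖ + ‖lam‖) * B) s := by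
      have h1 : IntegrableOn (fun t => ‖q t‖ + ‖lam‖) (Set.Icc (0:ℝ) 1) :=
        hqi.norm.add (integrableOn_const measure_Icc_lt_top.ne)
      have h2 : IntegrableOn (fun t => (‖q t‖ + ‖lam‖) * B) (Set.Icc (0:ℝ) 1) :=
        h1.mul_const B
      exact h2.mono_set hsub
    refine Integrable.mono hdom hms ?_
    refine (ae_restrict_iff' hs).2 (ae_of_all _ fun t ht => ?_)
    have h1 : ‖h0 t‖ ≤ (‖q t‖ + ‖lam‖) * B := by
      simp only [hh0]
      rw [norm_mul]
      apply mul_le_mul _ (hB t ht) (norm_nonneg _) (by positivity)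
      refine le_trans (norm_sub_le _ _) ?_
      rw [Complex.norm_real]
    refine le_trans h1 ?_
    rw [Real.norm_eq_abs]
    exact le_abs_self _
  -- the set of good right endpoints
  set T : Set ℝ := {b | b ∈ Set.Icc (0:ℝ) 1 ∧ IntegrableOn h0 (Set.Ioc 0 b)} with hT
  have h0T : (0:ℝ) ∈ T := by
    refine ⟨Set.left_mem_Icc.2 zero_le_one, ?_⟩
    rw [Set.Ioc_self]
    exact integrableOn_empty
  have hbdd : BddAbove T := ⟨1, fun b hb => hb.1.2⟩
  set β : ℝ := sSup T with hβ
  have hβ0 : 0 ≤ β := le_csSup hbdd h0T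
  have hβ1 : β ≤ 1 := csSup_le ⟨0, h0T⟩ (fun b hb => hb.1.2)
  have hltT : ∀ b, 0 ≤ b → b < β → b ∈ T := by
    intro b hb0 hbβ
    obtain ⟨c, hcT, hbc⟩ := exists_lt_of_lt_csSup ⟨0, h0T⟩ hbβ
    exact ⟨⟨hb0, le_trans hbc.le hcT.1.2⟩, hcT.2.mono_set (Set.Ioc_subset_Ioc le_rfl hbc.le)⟩
  -- β ∈ T
  have hβT : β ∈ T := by
    rcases eq_or_lt_of_le hβ0 with heq | hpos
    · rw [← heq]; exact h0T
    refine ⟨⟨hβ0, hβ1⟩, ?_⟩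
    have hIoo : IntegrableOn h0 (Set.Ioo 0 β) := by
      have hyIco : ContinuousOn y (Set.Ico 0 β) := by
        intro x hx
        set b : ℝ := (x + β) / 2 with hb
        have hxb : x < b := by simp only [hb]; linarith [hx.2]
        have hbβ : b < β := by simp only [hb]; linarith [hx.2]
        have hbT : b ∈ T := hltT b (by simp only [hb]; linarith [hx.1]) hbβ
        have hcont := (good b hbT.1 hbT.2).1
        have h1 : ContinuousWithinAt y (Set.Icc 0 b) x :=
          hcont x ⟨hx.1, hxb.le⟩
        apply h1.mono_of_mem_nhdsWithin
        apply Filter.mem_of_superset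
          (Filter.inter_mem self_mem_nhdsWithin
            (mem_nhdsWithin_of_mem_nhds (Iio_mem_nhds hxb)))
        rintro t ⟨ht1, ht2⟩
        exact ⟨ht1.1, le_of_lt ht2⟩
      have hym : AEStronglyMeasurable y (volume.restrict (Set.Ioo 0 β)) :=
        (hyIco.mono Set.Ioo_subset_Ico_self).aestronglyMeasurable measurableSet_Ioo
      apply hInt _ measurableSet_Ioo
        (fun t ht => ⟨ht.1.le, le_trans ht.2.le hβ1⟩) hym M hM0
      intro t ht
      set b : ℝ := (t + β) / 2 with hb
      have htb : t ≤ b := by simp only [hb]; linarith [ht.2]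
      have hbβ : b < β := by simp only [hb]; linarith [ht.2]
      have hbT : b ∈ T := hltT b (by simp only [hb]; linarith [ht.1]) hbβ
      have := bound b hbT.1 hbT.2 t ⟨ht.1.le, htb⟩
      have := norm_nonneg (y' t)
      linarith
    rw [integrableOn_Ioc_iff_integrableOn_Ioo]
    exact hIoo
  -- β = 1
  have h1T : (1:ℝ) ∈ T := by
    by_contra hcon
    have hβlt : β < 1 := lt_of_le_of_ne hβ1 (fun heq => hcon (heq ▸ hβT))
    have hconst : ∀ x ∈ Set.Ioc β 1, y' x = y' 0 := by
      intro x hx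
      have hnint : ¬ IntervalIntegrable h0 volume 0 x := by
        intro hbad
        have hxT : x ∈ T := ⟨⟨le_trans hβ0 hx.1.le, hx.2⟩,
          (intervalIntegrable_iff_integrableOn_Ioc_of_le (le_trans hβ0 hx.1.le)).1 hbad⟩
        exact absurd (le_csSup hbdd hxT) (not_le.2 hx.1)
      rw [hy' x ⟨le_trans hβ0 hx.1.le, hx.2⟩, intervalIntegral.integral_undef hnint,
        add_zero]
    have hy'int : IntegrableOn y' (Set.Ioc 0 1) := by
      rw [← Set.Ioc_union_Ioc_eq_Ioc hβ0 hβ1]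
      apply IntegrableOn.union
      · exact (intervalIntegrable_iff_integrableOn_Ioc_of_le hβ0).1 (good β hβT.1 hβT.2).2.2
      · refine (integrableOn_const measure_Ioc_lt_top.ne).congr_fun
          (fun t ht => (hconst t ht).symm) measurableSet_Ioc
    have hy'i1 : IntervalIntegrable y' volume 0 1 :=
      (intervalIntegrable_iff_integrableOn_Ioc_of_le zero_le_one).2 hy'int
    have hyc1 : ContinuousOn y (Set.Icc (0:ℝ) 1) := by
      have hprim : ContinuousOn (fun x => ∫ t in (0:ℝ)..x, y' t) (Set.Icc (0:ℝ) 1) := by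
        have := intervalIntegral.continuousOn_primitive_interval' hy'i1
          (by rw [Set.uIcc_of_le zero_le_one]; exact Set.left_mem_Icc.2 zero_le_one)
        rw [Set.uIcc_of_le zero_le_one] at this; exact this
      refine ContinuousOn.congr (f := fun x => y 0 + ∫ t in (0:ℝ)..x, y' t)
        (continuousOn_const.add hprim) ?_
      intro x hx
      exact hy x hx
    obtain ⟨t₁, ht₁, hmax⟩ := (isCompact_Icc (a := (0:ℝ)) (b := 1)).exists_isMaxOn
      (Set.nonempty_Icc.2 zero_le_one) hyc1.norm
    have h1int : IntegrableOn h0 (Set.Ioc 0 1) := by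
      apply hInt _ measurableSet_Ioc Set.Ioc_subset_Icc_self
        ((hyc1.mono Set.Ioc_subset_Icc_self).aestronglyMeasurable measurableSet_Ioc)
        ‖y t₁‖ (norm_nonneg _)
      intro t ht
      exact hmax ⟨ht.1.le, ht.2⟩
    exact hcon ⟨⟨zero_le_one, le_rfl⟩, h1int⟩
  obtain ⟨hyc, hy'c, hy'i⟩ := good 1 h1T.1 h1T.2
  exact ⟨hyc, hy'c, hy'i,
    (intervalIntegrable_iff_integrableOn_Ioc_of_le zero_le_one).2 h1T.2⟩

lemma wronskian {q : ℝ → ℝ} {lam : ℂ} {y y' z z' : ℝ → ℂ}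
    (hqi : IntegrableOn q (Set.Icc (0:ℝ) 1))
    (hy : IsSol q lam y y') (hz : IsSol q lam z z') :
    y 1 * z' 1 - y' 1 * z 1 = y 0 * z' 0 - y' 0 * z 0 := by
  obtain ⟨ycont, y'cont, y'i, hyI⟩ := sol_regular hqi hy
  obtain ⟨zcont, z'cont, z'i, hzI⟩ := sol_regular hqi hz
  have hyIoc : IntegrableOn (fun t => ((q t : ℂ) - lam) * y t) (Set.Ioc (0:ℝ) 1) :=
    (intervalIntegrable_iff_integrableOn_Ioc_of_le zero_le_one).1 hyI
  have hzIoc : IntegrableOn (fun t => ((q t : ℂ) - lam) * z t) (Set.Ioc (0:ℝ) 1) :=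
    (intervalIntegrable_iff_integrableOn_Ioc_of_le zero_le_one).1 hzI
  have hy'Ioc : IntegrableOn y' (Set.Ioc (0:ℝ) 1) :=
    (intervalIntegrable_iff_integrableOn_Ioc_of_le zero_le_one).1 y'i
  have e1 := ibp y'i hzI hy.1 hz.2 (tri_swap hy'Ioc hzIoc)
  have hz'Ioc : IntegrableOn z' (Set.Ioc (0:ℝ) 1) :=
    (intervalIntegrable_iff_integrableOn_Ioc_of_le zero_le_one).1 z'i
  have e2 := ibp hyI z'i hy.2 hz.1 (tri_swap hyIoc hz'Ioc)
  have e3 : ∫ t in (0:ℝ)..1, (y' t * z' t + y t * (((q t : ℂ) - lam) * z t)) =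
      ∫ t in (0:ℝ)..1, ((((q t : ℂ) - lam) * y t) * z t + y' t * z' t) := by
    refine intervalIntegral.integral_congr (fun t _ => ?_)
    ring
  linear_combination e1 - e2 + e3

lemma sq_int_le {v : ℝ → ℝ} (hv : ContinuousOn v (Set.Icc (0:ℝ) 1)) :
    (∫ t in (0:ℝ)..1, v t) ^ 2 ≤ ∫ t in (0:ℝ)..1, v t ^ 2 := by
  set μ1 := volume.restrict (Set.Ioc (0:ℝ) 1) with hμ1
  have hvi : Integrable v μ1 := (hv.integrableOn_Icc).mono_set Set.Ioc_subset_Icc_self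
  have hv2i : Integrable (fun t => v t ^ 2) μ1 :=
    ((hv.pow 2).integrableOn_Icc).mono_set Set.Ioc_subset_Icc_self
  have hone : ∫ _t, (1:ℝ) ∂μ1 = 1 := by
    simp [hμ1, Real.volume_Ioc]
  have hprod : ∫ p : ℝ × ℝ, v p.1 * v p.2 ∂(μ1.prod μ1) =
      (∫ t, v t ∂μ1) * (∫ t, v t ∂μ1) := integral_prod_mul v v
  have i1 : Integrable (fun p : ℝ × ℝ => v p.1 ^ 2 * 1) (μ1.prod μ1) :=
    hv2i.mul_prod (integrable_const 1)
  have i2 : Integrable (fun p : ℝ × ℝ => (1:ℝ) * v p.2 ^ 2) (μ1.prod μ1) :=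
    (integrable_const (1:ℝ)).mul_prod hv2i
  have hmono : ∫ p : ℝ × ℝ, v p.1 * v p.2 ∂(μ1.prod μ1) ≤
      ∫ p : ℝ × ℝ, (v p.1 ^ 2 * 1 + 1 * v p.2 ^ 2) / 2 ∂(μ1.prod μ1) := by
    apply integral_mono (hvi.mul_prod hvi) ((i1.add i2).div_const 2)
    intro p
    simp only [Pi.add_apply]
    nlinarith [sq_nonneg (v p.1 - v p.2)]
  have hrhs : ∫ p : ℝ × ℝ, (v p.1 ^ 2 * 1 + 1 * v p.2 ^ 2) / 2 ∂(μ1.prod μ1) =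
      ∫ t, v t ^ 2 ∂μ1 := by
    rw [MeasureTheory.integral_div, integral_add i1 i2,
      integral_prod_mul (fun t => v t ^ 2) (fun _ => (1:ℝ)),
      integral_prod_mul (fun _ => (1:ℝ)) (fun t => v t ^ 2), hone]
    ring
  rw [intervalIntegral.integral_of_le zero_le_one, intervalIntegral.integral_of_le zero_le_one]
  calc (∫ t, v t ∂μ1) ^ 2 = ∫ p : ℝ × ℝ, v p.1 * v p.2 ∂(μ1.prod μ1) := by rw [hprod]; ring
    _ ≤ _ := hmono
    _ = _ := hrhs

lemma vertex_bound {y y' : ℝ → ℂ}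
    (hyc : ContinuousOn y (Set.Icc (0:ℝ) 1)) (hy'c : ContinuousOn y' (Set.Icc (0:ℝ) 1))
    (hy'i : IntervalIntegrable y' volume 0 1)
    (hy : ∀ x ∈ Set.Icc (0:ℝ) 1, y x = y 0 + ∫ t in (0:ℝ)..x, y' t) :
    ‖y 0‖ ^ 2 ≤ 2 * (∫ t in (0:ℝ)..1, ‖y t‖ ^ 2) + 2 * (∫ t in (0:ℝ)..1, ‖y' t‖ ^ 2) := by
  set I := ∫ t in (0:ℝ)..1, ‖y' t‖ with hI
  have hbd : ∀ x ∈ Set.Icc (0:ℝ) 1, ‖y 0‖ ≤ ‖y x‖ + I := by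
    intro x hx
    have h1 : y 0 = y x - ∫ t in (0:ℝ)..x, y' t := by rw [hy x hx]; ring
    have h2 : ‖y 0‖ ≤ ‖y x‖ + ‖∫ t in (0:ℝ)..x, y' t‖ := by
      rw [h1]; exact norm_sub_le _ _
    have h3 : ‖∫ t in (0:ℝ)..x, y' t‖ ≤ ∫ t in (0:ℝ)..x, ‖y' t‖ :=
      intervalIntegral.norm_integral_le_integral_norm hx.1
    have h4 : (∫ t in (0:ℝ)..x, ‖y' t‖) ≤ I := by
      have ha : IntervalIntegrable (fun t => ‖y' t‖) volume 0 x :=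
        (hy'i.norm).mono_set (by rw [Set.uIcc_of_le hx.1, Set.uIcc_of_le zero_le_one]
                                 exact Set.Icc_subset_Icc le_rfl hx.2)
      have hb : IntervalIntegrable (fun t => ‖y' t‖) volume x 1 :=
        (hy'i.norm).mono_set (by rw [Set.uIcc_of_le hx.2, Set.uIcc_of_le zero_le_one]
                                 exact Set.Icc_subset_Icc hx.1 le_rfl)
      have := intervalIntegral.integral_add_adjacent_intervals ha hb
      have hpos : 0 ≤ ∫ t in x..1, ‖y' t‖ :=
        intervalIntegral.integral_nonneg hx.2 (fun t _ => norm_nonneg _)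
      rw [hI]
      linarith
    linarith
  have hsq : ∀ x ∈ Set.Icc (0:ℝ) 1, ‖y 0‖ ^ 2 ≤ 2 * ‖y x‖ ^ 2 + 2 * I ^ 2 := by
    intro x hx
    have := hbd x hx
    nlinarith [norm_nonneg (y x), norm_nonneg (y 0), sq_nonneg (‖y x‖ - I)]
  have hint : ‖y 0‖ ^ 2 ≤ ∫ x in (0:ℝ)..1, (2 * ‖y x‖ ^ 2 + 2 * I ^ 2) := by
    have h1 : (∫ _x in (0:ℝ)..1, (‖y 0‖ ^ 2 : ℝ)) = ‖y 0‖ ^ 2 := by simp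
    rw [← h1]
    apply intervalIntegral.integral_mono_on zero_le_one intervalIntegrable_const
    · have hc : ContinuousOn (fun x => 2 * ‖y x‖ ^ 2 + 2 * I ^ 2) (Set.Icc (0:ℝ) 1) :=
        (continuousOn_const.mul (hyc.norm.pow 2)).add continuousOn_const
      have h2 : IntegrableOn (fun x => 2 * ‖y x‖ ^ 2 + 2 * I ^ 2) (Set.uIcc (0:ℝ) 1) := by
        rw [Set.uIcc_of_le zero_le_one]; exact hc.integrableOn_Icc
      exact h2.intervalIntegrable
    · exact hsq
  have hynormi : IntervalIntegrable (fun x => ‖y x‖ ^ 2) volume 0 1 := by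
    have h2 : IntegrableOn (fun x => ‖y x‖ ^ 2) (Set.uIcc (0:ℝ) 1) := by
      rw [Set.uIcc_of_le zero_le_one]; exact (hyc.norm.pow 2).integrableOn_Icc
    exact h2.intervalIntegrable
  have hsplit : (∫ x in (0:ℝ)..1, (2 * ‖y x‖ ^ 2 + 2 * I ^ 2)) =
      2 * (∫ x in (0:ℝ)..1, ‖y x‖ ^ 2) + 2 * I ^ 2 := by
    rw [intervalIntegral.integral_add (hynormi.const_mul 2) intervalIntegrable_const,
      intervalIntegral.integral_const_mul]
    simp
  have hCS : I ^ 2 ≤ ∫ t in (0:ℝ)..1, ‖y' t‖ ^ 2 := sq_int_le hy'c.norm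
  rw [hsplit] at hint
  linarith

/-- a square-summable `λ`-eigenfunction of `H_k` on `Γ¹` with
`φ(1,λ) = 0` vanishes at all vertices of `Γ¹`. -/
theorem eigenfunction_vanishes_at_vertices
    (q : ℝ → ℝ) (hq : MemLp q 2 (volume.restrict (Set.Icc (0:ℝ) 1)))
    (m : ℕ) (hm : 1 ≤ m) (N : ℕ) (hN : N = 2 * m + 1) (k : ℤ)
    (s : ℂ) (hs : s = Complex.exp (2 * (Real.pi : ℂ) * Complex.I / (N : ℂ)))
    (lam : ℂ) (ph ph' : ℝ → ℂ)
    (hph : IsSol q lam ph ph') (hph0 : ph 0 = 0) (hph'0 : ph' 0 = 1)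
    (hDir : ph 1 = 0)
    (f f' : ℤ → Fin 3 → ℝ → ℂ) (hf : IsEigenfun q lam (s ^ k) f f')
    (hsum : Summable (fun p : ℤ × Fin 3 =>
      (∫ t in (0:ℝ)..1, ‖f p.1 p.2 t‖ ^ 2) + ∫ t in (0:ℝ)..1, ‖f' p.1 p.2 t‖ ^ 2)) :
    ∀ (n : ℤ) (j : Fin 3), f n j 0 = 0 ∧ f n j 1 = 0 := by
  haveI : IsFiniteMeasure (volume.restrict (Set.Icc (0:ℝ) 1)) :=
    ⟨by rw [Measure.restrict_apply_univ]; exact measure_Icc_lt_top⟩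
  have hqi : IntegrableOn q (Set.Icc (0:ℝ) 1) := hq.integrable one_le_two
  obtain ⟨hsol, hker⟩ := hf
  have hs0 : s ≠ 0 := by rw [hs]; exact Complex.exp_ne_zero _
  have hsk0 : s ^ k ≠ 0 := zpow_ne_zero _ hs0
  have hs1 : ‖s‖ = 1 := by
    have hNne : (N:ℂ) ≠ 0 := by
      simp only [Ne, Nat.cast_eq_zero]
      omega
    have harg : 2 * (Real.pi : ℂ) * Complex.I / (N : ℂ) =
        ((2 * Real.pi / N : ℝ) : ℂ) * Complex.I := by
      push_cast
      field_simp
    rw [hs, harg, Complex.norm_exp]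
    have : (((2 * Real.pi / N : ℝ) : ℂ) * Complex.I).re = 0 := by
      simp [Complex.mul_re]
    rw [this, Real.exp_zero]
  have hskn : ‖s ^ k‖ = 1 := by rw [norm_zpow, hs1, one_zpow]
  -- Wronskian relation:  f n j 1 * ph' 1 = f n j 0
  have wr : ∀ (n : ℤ) (j : Fin 3), f n j 1 * ph' 1 = f n j 0 := by
    intro n j
    have h := wronskian hqi (hsol n j) hph
    rw [hDir, hph0, hph'0] at h
    simpa using h
  by_cases hc : ph' 1 = 0
  · -- all values at 0 vanish, whence at 1 by the vertex conditions
    have hzero : ∀ (n : ℤ) (j : Fin 3), f n j 0 = 0 := by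
      intro n j
      have := wr n j
      rw [hc, mul_zero] at this
      exact this.symm
    intro n j
    refine ⟨hzero n j, ?_⟩
    obtain ⟨k1, k2, k3, k4, -, -⟩ := hker n
    fin_cases j
    · show f n 0 1 = 0
      rw [k1]; exact hzero n 1
    · show f n 1 1 = 0
      rw [k4]; exact hzero n 2
    · show f n 2 1 = 0
      have h2 : s ^ k * f n 2 1 = 0 := by rw [← k2]; exact hzero n 1
      exact (mul_eq_zero.1 h2).resolve_left hsk0
  · set a : ℂ := (ph' 1)⁻¹ with ha
    have ha0 : a ≠ 0 := inv_ne_zero hc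
    have key : ∀ (n : ℤ) (j : Fin 3), f n j 1 = a * f n j 0 := by
      intro n j
      have h := wr n j
      rw [← h, ha]
      field_simp
    set b : ℤ → ℂ := fun n => f n 0 0 with hb
    have rec1 : ∀ n : ℤ, b (n + 1) = a ^ 2 * b n := by
      intro n
      obtain ⟨k1, k2, k3, k4, -, -⟩ := hker n
      calc b (n + 1) = f n 1 1 := k3
        _ = a * f n 1 0 := key n 1
        _ = a * f n 0 1 := by rw [k1]
        _ = a * (a * f n 0 0) := by rw [key n 0]
        _ = a ^ 2 * b n := by rw [hb]; ring
    have constr : ∀ n : ℤ, b n ≠ 0 → s ^ k * a ^ 2 = 1 := by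
      intro n hbn
      obtain ⟨k1, k2, k3, k4, -, -⟩ := hker n
      have e1 : f n 1 0 = a * b n := by rw [← k1, key n 0]
      have e11 : f n 1 1 = a * (a * b n) := by rw [key n 1, e1]
      have e20 : f n 2 0 = a * (a * b n) := by rw [← k4, e11]
      have e21 : f n 2 1 = a * (a * (a * b n)) := by rw [key n 2, e20]
      have h3 : a * b n = s ^ k * (a * (a * (a * b n))) := by rw [← e21, ← e1]; exact k2
      have h4 : (1 - s ^ k * a ^ 2) * (a * b n) = 0 := by linear_combination h3
      rcases mul_eq_zero.1 h4 with h5 | h5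
      · have := sub_eq_zero.1 h5
        exact this.symm
      · exact absurd h5 (mul_ne_zero ha0 hbn)
    have hall : ∀ n : ℤ, b n = 0 := by
      by_contra hall
      push_neg at hall
      obtain ⟨n₀, hn₀⟩ := hall
      have hnorm_a : ‖a‖ = 1 := by
        have h1 := constr n₀ hn₀
        have h2 : ‖s ^ k‖ * ‖a‖ ^ 2 = 1 := by
          rw [← norm_pow, ← norm_mul, h1, norm_one]
        rw [hskn, one_mul] at h2
        nlinarith [norm_nonneg a]
      have hstep : ∀ n : ℤ, ‖b (n + 1)‖ = ‖b n‖ := by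
        intro n
        rw [rec1 n, norm_mul, norm_pow, hnorm_a]
        ring
      have hnorm0 : ∀ n : ℤ, ‖b n‖ = ‖b 0‖ := by
        intro n
        induction n using Int.induction_on with
        | zero => rfl
        | succ i ih => rw [hstep i]; exact ih
        | pred i ih =>
          have h := hstep (-(i:ℤ) - 1)
          have he : (-(i:ℤ) - 1 + 1) = -(i:ℤ) := by ring
          rw [he] at h
          rw [← h]; exact ih
      have hδ : 0 < ‖b n₀‖ ^ 2 / 2 := by
        have := norm_pos_iff.2 hn₀
        positivity
      have hlow : ∀ n : ℤ, ‖b n₀‖ ^ 2 / 2 ≤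
          (∫ t in (0:ℝ)..1, ‖f n 0 t‖ ^ 2) + ∫ t in (0:ℝ)..1, ‖f' n 0 t‖ ^ 2 := by
        intro n
        obtain ⟨hyc, hy'c, hy'i, -⟩ := sol_regular hqi (hsol n 0)
        have hvb := vertex_bound hyc hy'c hy'i (hsol n 0).1
        have hbn : ‖f n 0 0‖ = ‖b n₀‖ := by
          rw [hb] at hnorm0 ⊢
          exact (hnorm0 n).trans ((hnorm0 n₀).symm)
        rw [hbn] at hvb
        linarith
      have htend := hsum.tendsto_cofinite_zero
      have hev : ∀ᶠ p in Filter.cofinite,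
          (fun p : ℤ × Fin 3 => (∫ t in (0:ℝ)..1, ‖f p.1 p.2 t‖ ^ 2) +
            ∫ t in (0:ℝ)..1, ‖f' p.1 p.2 t‖ ^ 2) p < ‖b n₀‖ ^ 2 / 2 :=
        htend.eventually_lt_const hδ
      rw [Filter.eventually_cofinite] at hev
      have hinf : {p : ℤ × Fin 3 | ¬ (fun p : ℤ × Fin 3 =>
          (∫ t in (0:ℝ)..1, ‖f p.1 p.2 t‖ ^ 2) +
            ∫ t in (0:ℝ)..1, ‖f' p.1 p.2 t‖ ^ 2) p < ‖b n₀‖ ^ 2 / 2}.Infinite := by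
        apply Set.infinite_of_injective_forall_mem
          (f := fun n : ℤ => ((n, 0) : ℤ × Fin 3))
        · intro n1 n2 h
          exact congrArg Prod.fst h
        · intro n
          simp only [Set.mem_setOf_eq, not_lt]
          exact hlow n
      exact hinf hev
    intro n j
    obtain ⟨k1, k2, k3, k4, -, -⟩ := hker n
    have hb0 : f n 0 0 = 0 := hall n
    have hb1 : f n 1 1 = 0 := by rw [← k3]; exact hall (n + 1)
    have h10 : f n 1 0 = 0 := by rw [← k1, key n 0, hb0, mul_zero]
    have h21 : f n 2 1 = 0 := by
      have h2 : s ^ k * f n 2 1 = 0 := by rw [← k2]; exact h10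
      exact (mul_eq_zero.1 h2).resolve_left hsk0
    have h20 : f n 2 0 = 0 := by rw [← k4]; exact hb1
    have h01 : f n 0 1 = 0 := by rw [k1]; exact h10
    fin_cases j
    exacts [⟨hb0, h01⟩, ⟨h10, hb1⟩, ⟨h20, h21⟩]

end
end

section
/- Suppose φ(1,λ) = 0, and set c = φ′(1,λ), η = 1 − s^k·c², and φ = φ(·,λ). Define the family ψ = (ψ_{n,j}) as follows. If η ≠ 0: ψ_{0,0} = η·φ, ψ_{0,1} = c·φ, ψ_{0,2} = c²·φ, ψ_{−1,0} = 0, ψ_{−1,1} = −s^k·c·φ, ψ_{−1,2} = −φ, and ψ_{n,j} = 0 for all n ∉ {0, −1}. If η = 0: ψ_{0,0} = 0, ψ_{0,1} = φ, ψ_{0,2} = c·φ, and ψ_{n,j} = 0 for all n ≠ 0. Then in either case ψ is a λ-eigenfunction of H_k on the zigzag graph Γ¹ (in particular each component solves −y″ + q·y = λ·y and all Kirchhoff boundary conditions hold); it is supported on finitely many edges. -/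
/-!
Since `φ(0) = φ(1) = 0`, every family of the form `ψ_{n,j} = a_{n,j}·φ` satisfies the
continuity conditions at all vertices trivially, and each component solves the equation by
linearity. With `φ′(0) = 1` and `φ′(1) = c`, the two current conditions at the vertices of
period `n` become the linear equations `−c·a_{n,0} + a_{n,1} − s^k·c·a_{n,2} = 0` and
`a_{n+1,0} − c·a_{n,1} + a_{n,2} = 0` in the coefficients, which both explicit tables satisfy
because `η = 1 − s^k·c²`.
-/

open MeasureTheory

noncomputable section

theorem IsSol.const_mul {q : ℝ → ℝ} {lam : ℂ} {y y' : ℝ → ℂ} (h : IsSol q lam y y') (a : ℂ) :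
    IsSol q lam (fun t => a * y t) (fun t => a * y' t) := by
  obtain ⟨hy, hy'⟩ := h
  refine ⟨fun x hx => ?_, fun x hx => ?_⟩ <;> beta_reduce
  · rw [intervalIntegral.integral_const_mul, hy x hx, mul_add]
  · simp_rw [mul_left_comm _ a, intervalIntegral.integral_const_mul]
    rw [hy' x hx, mul_add]

/-- The current conditions of `IsEigenfun` for the family `a_{n,j}·φ`, where `φ` vanishes at
both ends, `φ′(0) = 1` and `φ′(1) = c`. -/
def KirchhoffCoeff (sk c : ℂ) (a : ℤ → Fin 3 → ℂ) : Prop :=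
  ∀ n : ℤ, -a n 0 * c + a n 1 - sk * a n 2 * c = 0 ∧ a (n + 1) 0 - a n 1 * c + a n 2 = 0

theorem isEigenfun_mul_of_kirchhoffCoeff {q : ℝ → ℝ} {lam sk : ℂ} {ph ph' : ℝ → ℂ}
    (hph : IsSol q lam ph ph') (hph0 : ph 0 = 0) (hph1 : ph 1 = 0) (hph'0 : ph' 0 = 1)
    {a : ℤ → Fin 3 → ℂ} (ha : KirchhoffCoeff sk (ph' 1) a) :
    IsEigenfun q lam sk (fun n j t => a n j * ph t) (fun n j t => a n j * ph' t) := by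
  refine ⟨fun n j => hph.const_mul _, fun n => ?_⟩
  obtain ⟨h₁, h₂⟩ := ha n
  simp only [hph0, hph1, hph'0, mul_zero, mul_one, true_and]
  exact ⟨by linear_combination h₁, by linear_combination h₂⟩

theorem finite_support_mul {ι κ R X : Type*} [Finite κ] [MulZeroClass R]
    {a : ι → κ → R} {S : Set ι} (hS : S.Finite) (ha : ∀ n ∉ S, ∀ j, a n j = 0) (ph : X → R) :
    {p : ι × κ | (fun t => a p.1 p.2 * ph t) ≠ 0}.Finite := by
  refine (hS.prod Set.finite_univ).subset fun p hp => ⟨?_, trivial⟩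
  by_contra hn
  exact hp (funext fun t => by simp [ha _ hn])

/-- The coefficients of `ψ` when `η ≠ 0`. -/
def coeffA (sk c eta : ℂ) (n : ℤ) (j : Fin 3) : ℂ :=
  if n = 0 then (if j = 0 then eta else if j = 1 then c else c ^ 2)
  else if n = -1 then (if j = 0 then 0 else if j = 1 then -(sk * c) else -1)
  else 0

/-- The coefficients of `ψ` when `η = 0`. -/
def coeffB (c : ℂ) (n : ℤ) (j : Fin 3) : ℂ :=
  if n = 0 then (if j = 0 then 0 else if j = 1 then 1 else c) else 0

theorem coeffA_eq_zero {sk c eta : ℂ} : ∀ n ∉ ({0, -1} : Set ℤ), ∀ j, coeffA sk c eta n j = 0 := by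
  intro n hn j
  simp only [Set.mem_insert_iff, Set.mem_singleton_iff, not_or] at hn
  simp [coeffA, hn.1, hn.2]

theorem coeffB_eq_zero {c : ℂ} : ∀ n ∉ ({0} : Set ℤ), ∀ j, coeffB c n j = 0 := by
  intro n hn j
  simp [coeffB, Set.mem_singleton_iff.not.mp hn]

theorem kirchhoffCoeff_coeffA {sk c : ℂ} :
    KirchhoffCoeff sk c (coeffA sk c (1 - sk * c ^ 2)) := by
  intro n
  obtain rfl | rfl | rfl | ⟨h₀, h₁, h₂, h₃⟩ :
      n = 0 ∨ n = -1 ∨ n = -2 ∨ (n ≠ 0 ∧ n ≠ -1 ∧ n + 1 ≠ 0 ∧ n + 1 ≠ -1) := by omega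
  · norm_num [coeffA, Fin.ext_iff]; constructor <;> ring
  · norm_num [coeffA, Fin.ext_iff]; ring
  · norm_num [coeffA]
  · simp [coeffA, h₀, h₁, h₂, h₃]

theorem kirchhoffCoeff_coeffB {sk c : ℂ} (hη : 1 - sk * c ^ 2 = 0) :
    KirchhoffCoeff sk c (coeffB c) := by
  intro n
  obtain rfl | rfl | ⟨h₀, h₁⟩ : n = 0 ∨ n = -1 ∨ (n ≠ 0 ∧ n + 1 ≠ 0) := by omega
  · norm_num [coeffB, Fin.ext_iff]; linear_combination hη
  · norm_num [coeffB]
  · simp [coeffB, h₀, h₁]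

theorem compactly_supported_eigenfunction_general
    (q : ℝ → ℝ) (k : ℤ)
    (s : ℂ)
    (lam : ℂ) (ph ph' : ℝ → ℂ)
    (hph : IsSol q lam ph ph') (hph0 : ph 0 = 0) (hph'0 : ph' 0 = 1)
    (hDir : ph 1 = 0)
    (c eta : ℂ) (hc : c = ph' 1) (heta : eta = 1 - s ^ k * c ^ 2)
    (psiA psiA' psiB psiB' : ℤ → Fin 3 → ℝ → ℂ)
    (hpsiA : psiA = fun n j t =>
      if n = 0 then (if j = 0 then eta * ph t else if j = 1 then c * ph t else c ^ 2 * ph t)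
      else if n = -1 then (if j = 0 then 0 else if j = 1 then -(s ^ k * c) * ph t else -ph t)
      else 0)
    (hpsiA' : psiA' = fun n j t =>
      if n = 0 then (if j = 0 then eta * ph' t else if j = 1 then c * ph' t else c ^ 2 * ph' t)
      else if n = -1 then (if j = 0 then 0 else if j = 1 then -(s ^ k * c) * ph' t else -ph' t)
      else 0)
    (hpsiB : psiB = fun n j t =>
      if n = 0 then (if j = 0 then 0 else if j = 1 then ph t else c * ph t) else 0)
    (hpsiB' : psiB' = fun n j t =>
      if n = 0 then (if j = 0 then 0 else if j = 1 then ph' t else c * ph' t) else 0) :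
    (eta ≠ 0 → IsEigenfun q lam (s ^ k) psiA psiA' ∧
      {p : ℤ × Fin 3 | psiA p.1 p.2 ≠ 0}.Finite) ∧
    (eta = 0 → IsEigenfun q lam (s ^ k) psiB psiB' ∧
      {p : ℤ × Fin 3 | psiB p.1 p.2 ≠ 0}.Finite) := by
  have hA : ∀ y : ℝ → ℂ, (fun n j t => coeffA (s ^ k) c eta n j * y t) =
      fun n j t => if n = 0 then (if j = 0 then eta * y t else if j = 1 then c * y t else c ^ 2 * y t)
        else if n = -1 then (if j = 0 then 0 else if j = 1 then -(s ^ k * c) * y t else -y t)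
        else 0 := by
    intro y; funext n j t; unfold coeffA; split_ifs <;> ring
  have hB : ∀ y : ℝ → ℂ, (fun n j t => coeffB c n j * y t) =
      fun n j t => if n = 0 then (if j = 0 then 0 else if j = 1 then y t else c * y t) else 0 := by
    intro y; funext n j t; unfold coeffB; split_ifs <;> ring
  rw [← hA] at hpsiA hpsiA'
  rw [← hB] at hpsiB hpsiB'
  subst hpsiA hpsiA' hpsiB hpsiB' hc heta
  refine ⟨fun _ => ⟨?_, ?_⟩, fun hη => ⟨?_, ?_⟩⟩
  · exact isEigenfun_mul_of_kirchhoffCoeff hph hph0 hDir hph'0 kirchhoffCoeff_coeffA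
  · exact finite_support_mul (Set.toFinite _) coeffA_eq_zero ph
  · exact isEigenfun_mul_of_kirchhoffCoeff hph hph0 hDir hph'0 (kirchhoffCoeff_coeffB hη)
  · exact finite_support_mul (Set.toFinite _) coeffB_eq_zero ph

/-- the explicit compactly supported `λ`-eigenfunctions `ψ⁽⁰⁾` of `H_k`
at a Dirichlet eigenvalue `λ` (`φ(1,λ) = 0`), in the two cases `η ≠ 0` and `η = 0`,
where `c = φ′(1,λ)`, `η = 1 − s^k·c²`. -/
theorem compactly_supported_eigenfunction
    (q : ℝ → ℝ) (hq : MemLp q 2 (volume.restrict (Set.Icc (0:ℝ) 1)))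
    (m : ℕ) (hm : 1 ≤ m) (N : ℕ) (hN : N = 2 * m + 1) (k : ℤ)
    (s : ℂ) (hs : s = Complex.exp (2 * (Real.pi : ℂ) * Complex.I / (N : ℂ)))
    (lam : ℂ) (ph ph' : ℝ → ℂ)
    (hph : IsSol q lam ph ph') (hph0 : ph 0 = 0) (hph'0 : ph' 0 = 1)
    (hDir : ph 1 = 0)
    (c eta : ℂ) (hc : c = ph' 1) (heta : eta = 1 - s ^ k * c ^ 2)
    (psiA psiA' psiB psiB' : ℤ → Fin 3 → ℝ → ℂ)
    (hpsiA : psiA = fun n j t =>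
      if n = 0 then (if j = 0 then eta * ph t else if j = 1 then c * ph t else c ^ 2 * ph t)
      else if n = -1 then (if j = 0 then 0 else if j = 1 then -(s ^ k * c) * ph t else -ph t)
      else 0)
    (hpsiA' : psiA' = fun n j t =>
      if n = 0 then (if j = 0 then eta * ph' t else if j = 1 then c * ph' t else c ^ 2 * ph' t)
      else if n = -1 then (if j = 0 then 0 else if j = 1 then -(s ^ k * c) * ph' t else -ph' t)
      else 0)
    (hpsiB : psiB = fun n j t =>
      if n = 0 then (if j = 0 then 0 else if j = 1 then ph t else c * ph t) else 0)
    (hpsiB' : psiB' = fun n j t =>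
      if n = 0 then (if j = 0 then 0 else if j = 1 then ph' t else c * ph' t) else 0) :
    (eta ≠ 0 → IsEigenfun q lam (s ^ k) psiA psiA' ∧
      {p : ℤ × Fin 3 | psiA p.1 p.2 ≠ 0}.Finite) ∧
    (eta = 0 → IsEigenfun q lam (s ^ k) psiB psiB' ∧
      {p : ℤ × Fin 3 | psiB p.1 p.2 ≠ 0}.Finite) :=
  compactly_supported_eigenfunction_general q k s lam ph ph' hph hph0 hph'0 hDir c eta hc heta psiA
    psiA' psiB psiB' hpsiA hpsiA' hpsiB hpsiB'

end
end
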